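/- arXiv:2410.20093 — 2 statements merged into one kernel-verified Lean document; each statement's English description precedes it below -/
import Mathlib

section
/- Let f : ℝ → ℂ be measurable with |f(p)| ≤ C (1+|p|)^{-(1+ε)} for some 0 < ε < 1 and constant C. Then the inverse Fourier transform V(r) = (2π)^{-1} ∫_ℝ e^{irp} f(p) dp is Hölder continuous of exponent ε on ℝ, i.e. V is bounded and there is a constant C' with |V(r) - V(r')| ≤ C' |r - r'|^ε for all r, r' with |r - r'| ≤ 1. -/
/-!
Since `‖e^{irp} - e^{ir'p}‖ ≤ min 2 (|r - r'| |p|)` and `‖f p‖ ≤ C |p|^{-(1+ε)}`, the difference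
`V r - V r'` is bounded by `C ∫ min 2 (t |p|) |p|^{-(1+ε)} dp` with `t = |r - r'|`. The kernel
`min 2 |p| · |p|^{-(1+ε)}` is integrable precisely because `0 < ε < 1` (it behaves like `|p|^{-ε}`
at `0` and like `|p|^{-(1+ε)}` at infinity), and the substitution `p ↦ t p` shows that its
`t`-dilate integrates to `t^ε` times a constant.
-/

open MeasureTheory Real Complex Set

section Kernel

variable {c ε : ℝ}

lemma integrableOn_min_mul_rpow_Ioi (hc : 0 ≤ c) (hε0 : 0 < ε) (hε1 : ε < 1) :
    IntegrableOn (fun u : ℝ => min c u * u ^ (-(1 + ε))) (Ioi 0) := by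
  have hmeas : AEStronglyMeasurable (fun u : ℝ => min c u * u ^ (-(1 + ε))) :=
    (by fun_prop : Measurable fun u : ℝ => min c u * u ^ (-(1 + ε))).aestronglyMeasurable
  have hnear : IntegrableOn (fun u : ℝ => u ^ (-ε)) (Ioc 0 1) :=
    (intervalIntegrable_iff_integrableOn_Ioc_of_le zero_le_one).1
      (intervalIntegral.intervalIntegrable_rpow' (by linarith))
  have hfar : IntegrableOn (fun u : ℝ => c * u ^ (-(1 + ε))) (Ioi 1) :=
    (integrableOn_Ioi_rpow_of_lt (by linarith) zero_lt_one).const_mul c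
  rw [← Ioc_union_Ioi_eq_Ioi zero_le_one]
  refine IntegrableOn.union ?_ ?_
  · refine hnear.mono' hmeas.restrict ((ae_restrict_iff' measurableSet_Ioc).2 (.of_forall ?_))
    rintro u ⟨hu0, -⟩
    have hmin : 0 ≤ min c u := le_min hc hu0.le
    calc ‖min c u * u ^ (-(1 + ε))‖ = min c u * u ^ (-(1 + ε)) := by
          rw [Real.norm_of_nonneg (by positivity)]
      _ ≤ u * u ^ (-(1 + ε)) := by gcongr; exact min_le_right _ _
      _ = u ^ (-ε) := by
          rw [← Real.rpow_one_add' hu0.le (by linarith)]; ring_nf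
  · refine hfar.mono' hmeas.restrict ((ae_restrict_iff' measurableSet_Ioi).2 (.of_forall ?_))
    intro u hu
    have hu0 : 0 < u := zero_lt_one.trans hu
    have hmin : 0 ≤ min c u := le_min hc hu0.le
    rw [Real.norm_of_nonneg (by positivity)]
    gcongr
    exact min_le_left _ _

lemma integrable_min_abs_mul_abs_rpow (hc : 0 ≤ c) (hε0 : 0 < ε) (hε1 : ε < 1) :
    Integrable (fun p : ℝ => min c |p| * |p| ^ (-(1 + ε))) := by
  have h := (integrable_fun_norm_addHaar (volume : Measure ℝ)
    (f := fun u : ℝ => min c u * u ^ (-(1 + ε)))).2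
  simp only [Real.norm_eq_abs, Module.finrank_self, tsub_self, pow_zero, one_smul] at h
  exact h (integrableOn_min_mul_rpow_Ioi hc hε0 hε1)

lemma min_mul_abs_mul_abs_rpow_eq {t : ℝ} (ht : 0 < t) (p : ℝ) :
    min c (t * |p|) * |p| ^ (-(1 + ε)) =
      t ^ (1 + ε) * (min c |t * p| * |t * p| ^ (-(1 + ε))) := by
  rw [abs_mul, abs_of_pos ht, Real.mul_rpow ht.le (abs_nonneg p), Real.rpow_neg ht.le]
  field_simp

lemma integrable_min_mul_abs_mul_abs_rpow (hc : 0 ≤ c) (hε0 : 0 < ε) (hε1 : ε < 1) {t : ℝ}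
    (ht : 0 ≤ t) : Integrable (fun p : ℝ => min c (t * |p|) * |p| ^ (-(1 + ε))) := by
  rcases ht.eq_or_lt with rfl | ht
  · simp [min_eq_right hc]
  simp_rw [min_mul_abs_mul_abs_rpow_eq ht]
  exact ((integrable_min_abs_mul_abs_rpow hc hε0 hε1).comp_mul_left' ht.ne').const_mul _

lemma integral_min_mul_abs_mul_abs_rpow (hc : 0 ≤ c) (hε0 : 0 < ε) {t : ℝ} (ht : 0 ≤ t) :
    ∫ p : ℝ, min c (t * |p|) * |p| ^ (-(1 + ε)) =
      t ^ ε * ∫ p : ℝ, min c |p| * |p| ^ (-(1 + ε)) := by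
  rcases ht.eq_or_lt with rfl | ht
  · simp [min_eq_right hc, Real.zero_rpow hε0.ne']
  simp_rw [min_mul_abs_mul_abs_rpow_eq ht]
  rw [integral_const_mul, Measure.integral_comp_mul_left (fun x => min c |x| * |x| ^ (-(1 + ε))),
    abs_of_pos (inv_pos.2 ht), smul_eq_mul, ← mul_assoc, ← Real.rpow_neg_one,
    ← Real.rpow_add ht]
  ring_nf

end Kernel

lemma norm_cexp_I_mul_sub_cexp_I_mul_le (a b : ℝ) :
    ‖Complex.exp (Complex.I * a) - Complex.exp (Complex.I * b)‖ ≤ min 2 |a - b| := by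
  refine le_min ?_ ?_
  · calc _ ≤ ‖Complex.exp (Complex.I * a)‖ + ‖Complex.exp (Complex.I * b)‖ := norm_sub_le _ _
      _ = 2 := by rw [norm_exp_I_mul_ofReal, norm_exp_I_mul_ofReal]; norm_num
  · have hfactor : Complex.exp (Complex.I * a) - Complex.exp (Complex.I * b) =
        Complex.exp (Complex.I * b) * (Complex.exp (Complex.I * ↑(a - b)) - 1) := by
      rw [mul_sub, ← Complex.exp_add]; push_cast; ring_nf
    rw [hfactor, norm_mul, norm_exp_I_mul_ofReal, one_mul, ← Real.norm_eq_abs]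
    exact norm_exp_I_mul_ofReal_sub_one_le

lemma norm_cexp_I_mul_mul_sub_cexp_I_mul_mul_le (r r' p : ℝ) :
    ‖Complex.exp (Complex.I * r * p) - Complex.exp (Complex.I * r' * p)‖ ≤
      min 2 (|r - r'| * |p|) := by
  have h := norm_cexp_I_mul_sub_cexp_I_mul_le (r * p) (r' * p)
  rw [← sub_mul, abs_mul] at h
  push_cast at h
  simpa only [mul_assoc] using h

lemma norm_integral_cexp_I_mul_mul_le (f : ℝ → ℂ) (r : ℝ) :
    ‖∫ p : ℝ, Complex.exp (Complex.I * r * p) * f p‖ ≤ ∫ p : ℝ, ‖f p‖ := by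
  refine (norm_integral_le_integral_norm _).trans (le_of_eq ?_)
  congr 1 with p
  rw [norm_mul, mul_assoc, ← ofReal_mul, norm_exp_I_mul_ofReal, one_mul]

lemma integrable_cexp_I_mul_mul {f : ℝ → ℂ} (hf : Integrable f) (r : ℝ) :
    Integrable fun p : ℝ => Complex.exp (Complex.I * r * p) * f p :=
  hf.bdd_mul (c := 1) (by fun_prop) (.of_forall fun p => by
    rw [mul_assoc, ← ofReal_mul, norm_exp_I_mul_ofReal])

lemma norm_integral_cexp_I_mul_mul_sub_le {f : ℝ → ℂ} {C ε : ℝ} (hε0 : 0 < ε) (hε1 : ε < 1)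
    (hf : Integrable f) (hf_bd : ∀ᵐ p, ‖f p‖ ≤ C * |p| ^ (-(1 + ε))) (r r' : ℝ) :
    ‖(∫ p : ℝ, Complex.exp (Complex.I * r * p) * f p) -
        ∫ p : ℝ, Complex.exp (Complex.I * r' * p) * f p‖ ≤
      C * (∫ p : ℝ, min 2 |p| * |p| ^ (-(1 + ε))) * |r - r'| ^ ε := by
  have ht : 0 ≤ |r - r'| := abs_nonneg _
  rw [← integral_sub (integrable_cexp_I_mul_mul hf r) (integrable_cexp_I_mul_mul hf r')]
  calc _ ≤ ∫ p : ℝ, ‖Complex.exp (Complex.I * r * p) * f p -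
        Complex.exp (Complex.I * r' * p) * f p‖ := norm_integral_le_integral_norm _
    _ ≤ ∫ p : ℝ, C * (min 2 (|r - r'| * |p|) * |p| ^ (-(1 + ε))) := by
        refine integral_mono_of_nonneg (.of_forall fun _ => norm_nonneg _)
          ((integrable_min_mul_abs_mul_abs_rpow zero_le_two hε0 hε1 ht).const_mul C) ?_
        filter_upwards [hf_bd] with p hp
        rw [← sub_mul, norm_mul]
        calc _ ≤ min 2 (|r - r'| * |p|) * (C * |p| ^ (-(1 + ε))) :=
              mul_le_mul (norm_cexp_I_mul_mul_sub_cexp_I_mul_mul_le r r' p) hp (norm_nonneg _)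
                (le_min zero_le_two (by positivity))
          _ = _ := by ring
    _ = _ := by
        rw [integral_const_mul, integral_min_mul_abs_mul_abs_rpow zero_le_two hε0 ht]
        ring

/-- If `f` is measurable with `|f p| ≤ C (1+|p|)^{-(1+ε)}`, `0 < ε < 1`,
then the inverse Fourier transform `V r = (2π)⁻¹ ∫ e^{irp} f p dp` is bounded and
Hölder continuous of exponent `ε`. -/
theorem stmt0 (f : ℝ → ℂ) (C : ℝ) (ε : ℝ) (hε0 : 0 < ε) (hε1 : ε < 1)
    (hf_meas : Measurable f)
    (hf_bd : ∀ p : ℝ, ‖f p‖ ≤ C * (1 + |p|) ^ (-(1 + ε))) :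
    ∃ C' : ℝ, (∀ r : ℝ, ‖(2 * π : ℝ)⁻¹ • ∫ p : ℝ, Complex.exp (Complex.I * r * p) * f p‖ ≤ C') ∧
      ∀ r r' : ℝ, |r - r'| ≤ 1 →
        ‖((2 * π : ℝ)⁻¹ • ∫ p : ℝ, Complex.exp (Complex.I * r * p) * f p) -
          ((2 * π : ℝ)⁻¹ • ∫ p : ℝ, Complex.exp (Complex.I * r' * p) * f p)‖ ≤
          C' * |r - r'| ^ ε := by
  have hf_int : Integrable f := by
    refine ((integrable_one_add_norm (E := ℝ) (μ := volume) (r := 1 + ε) ?_).const_mul C).mono'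
      hf_meas.aestronglyMeasurable (.of_forall fun p => ?_)
    · rw [Module.finrank_self]; push_cast; linarith
    · simpa only [Real.norm_eq_abs] using hf_bd p
  -- only almost everywhere, since `|0| ^ (-(1 + ε)) = 0` in Lean
  have hf_bd' : ∀ᵐ p : ℝ, ‖f p‖ ≤ C * |p| ^ (-(1 + ε)) := by
    filter_upwards [Measure.ae_ne volume 0] with p hp
    have hC : 0 ≤ C := by simpa using (norm_nonneg _).trans (hf_bd 0)
    refine (hf_bd p).trans (mul_le_mul_of_nonneg_left ?_ hC)
    exact Real.rpow_le_rpow_of_nonpos (abs_pos.2 hp) (by linarith) (by linarith)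
  set K := ∫ p : ℝ, min 2 |p| * |p| ^ (-(1 + ε))
  have hπ : 0 < (2 * π)⁻¹ := by positivity
  refine ⟨(2 * π)⁻¹ * max (∫ p, ‖f p‖) (C * K), fun r => ?_, fun r r' _ => ?_⟩
  · rw [norm_smul, Real.norm_of_nonneg hπ.le]
    gcongr
    exact (norm_integral_cexp_I_mul_mul_le f r).trans (le_max_left _ _)
  · rw [← smul_sub, norm_smul, Real.norm_of_nonneg hπ.le, mul_assoc]
    gcongr
    exact (norm_integral_cexp_I_mul_mul_sub_le hε0 hε1 hf_int hf_bd' r r').trans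
      (by gcongr; exact le_max_right _ _)
end

section
/- Let f : ℝ → ℂ be Lipschitz with f(±∞) = 0 and |f'(p)| ≤ C (1+|p|)^{-(1+ε)}, 0 < ε < 1. Let w denote the continuous representative of the inverse Fourier transform of the function p ↦ i f'(p) (so that formally w(r) = r V(r), where V is the inverse Fourier transform of f). Then w(0) = 0. -/
open Filter Real Topology MeasureTheory

/-! At `r = 0` the exponential is `1`, so `w 0 = (2π)⁻¹ i ∫ f'`; the decay bound makes `f'`
integrable, and then `∫ f' = f(+∞) - f(-∞) = 0`. -/

theorem integrable_of_norm_le_mul_one_add_abs_rpow_neg {E : Type*} [NormedAddCommGroup E]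
    {g : ℝ → E} (hg : AEStronglyMeasurable g) {C s : ℝ} (hs : 1 < s)
    (hbound : ∀ p, ‖g p‖ ≤ C * (1 + |p|) ^ (-s)) : Integrable g := by
  have hmaj : Integrable (fun p : ℝ => C * (1 + |p|) ^ (-s)) := by
    simpa only [Real.norm_eq_abs] using
      (integrable_one_add_norm (E := ℝ) (μ := volume) (r := s) (by simpa using hs)).const_mul C
  exact hmaj.mono' hg (ae_of_all _ hbound)

theorem integral_deriv_eq_zero_of_tendsto_zero {E : Type*} [NormedAddCommGroup E]
    [NormedSpace ℝ E] [CompleteSpace E] {f : ℝ → E} (hdiff : Differentiable ℝ f)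
    (hint : Integrable (deriv f)) (hbot : Tendsto f atBot (𝓝 0))
    (htop : Tendsto f atTop (𝓝 0)) : ∫ p, deriv f p = 0 := by
  simpa using integral_of_hasDerivAt_of_tendsto (fun x => (hdiff x).hasDerivAt) hint hbot htop

theorem stmt5_general (f : ℝ → ℂ) (C ε : ℝ) (hε0 : 0 < ε)
    (hdiff : Differentiable ℝ f)
    (htop : Tendsto f atTop (𝓝 0)) (hbot : Tendsto f atBot (𝓝 0))
    (hder : ∀ p : ℝ, ‖deriv f p‖ ≤ C * (1 + |p|) ^ (-(1 + ε)))
    (w : ℝ → ℂ)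
    (hw : ∀ r : ℝ, w r = (2 * π : ℝ)⁻¹ •
      ∫ p : ℝ, Complex.exp (Complex.I * r * p) * (Complex.I * deriv f p)) :
    w 0 = 0 := by
  have hint : Integrable (deriv f) :=
    integrable_of_norm_le_mul_one_add_abs_rpow_neg (measurable_deriv f).aestronglyMeasurable
      (by linarith) hder
  have hzero : ∫ p, deriv f p = 0 := integral_deriv_eq_zero_of_tendsto_zero hdiff hint hbot htop
  simp only [hw 0, Complex.ofReal_zero, mul_zero, zero_mul, Complex.exp_zero, one_mul,
    integral_const_mul, hzero, smul_zero]

/-- under the hypotheses of Lemma `lemma-V-eps`, the (continuous) inverse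
Fourier transform `w` of `p ↦ i f'(p)` vanishes at the origin: `w 0 = 0`. -/
theorem stmt5 (f : ℝ → ℂ) (C ε : ℝ) (hε0 : 0 < ε) (hε1 : ε < 1)
    (hlip : ∃ L : NNReal, LipschitzWith L f)
    (hdiff : Differentiable ℝ f)
    (htop : Tendsto f atTop (𝓝 0)) (hbot : Tendsto f atBot (𝓝 0))
    (hder : ∀ p : ℝ, ‖deriv f p‖ ≤ C * (1 + |p|) ^ (-(1 + ε)))
    (w : ℝ → ℂ)
    (hw : ∀ r : ℝ, w r = (2 * π : ℝ)⁻¹ •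
      ∫ p : ℝ, Complex.exp (Complex.I * r * p) * (Complex.I * deriv f p)) :
    w 0 = 0 :=
  stmt5_general f C ε hε0 hdiff htop hbot hder w hw
end
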